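/- Let φ : ℕ → ℂ satisfy Σ_{k≥0} |φ_k|² = 1, Σ_{k≥0} k·|φ_k|² = E, and Σ_{k≥0} k²·|φ_k|² = M (all series convergent), and let ξ ≥ 0. Define sequences ψ, ψ̃ : ℕ → ℂ by ψ_0 = ψ̃_0 = 0, ψ_{k+1} = √(k+1)·φ_k / √(E+1), and ψ̃_{k+1} = √(k+1)·(cosh ξ)^{−k}·φ_k / √(E+1) for all k ≥ 0. Then: (i) Σ_{n≥0} |ψ̃_n|² ≤ 1; and (ii) √( (1/4)·(1 + Σ_{n≥0}|ψ̃_n|²)² − |Σ_{n≥0} conj(ψ_n)·ψ̃_n|² ) ≤ ( 8·(E+M)/(E+1) )^{1/4} · √ξ. -/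

import Mathlib

/-!
With `u = (cosh ξ)⁻¹ ∈ (0, 1]` the attenuated state is diagonal in the photon-added one,
`ψ̃ₖ₊₁ = uᵏ ψₖ₊₁`. The weights `wₖ = |ψₖ₊₁|²` form a probability distribution with mean
`(E + M) / (E + 1)`, and `‖ψ̃‖² = ∑ wₖ u²ᵏ`, `⟨ψ, ψ̃⟩ = ∑ wₖ uᵏ`. Writing `S = ‖ψ̃‖²`,
`I = ⟨ψ, ψ̃⟩`, the quantity under the square root is `((1 + S)/2 - I)((1 + S)/2 + I)`, where
`1 + S - 2I = ∑ wₖ (1 - uᵏ)²` and the second factor is at most `2`. Bernoulli's inequality and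
`cosh ξ ≤ exp (ξ² / 2)` give `(1 - uᵏ)² ≤ 1 - uᵏ ≤ k ξ² / 2`, so the quantity is at most
`(E + M) / (E + 1) · ξ² / 2`; being also at most `1`, it is at most `√(8 (E + M) / (E + 1)) ξ`.
-/

open Real

theorem one_sub_pow_le_mul_one_sub {u : ℝ} (hu : -1 ≤ u) (k : ℕ) : 1 - u ^ k ≤ k * (1 - u) := by
  have := one_add_mul_le_pow (a := u - 1) (by linarith) k
  rw [add_sub_cancel] at this
  linarith

theorem one_sub_inv_cosh_le (ξ : ℝ) : 1 - (cosh ξ)⁻¹ ≤ ξ ^ 2 / 2 := by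
  have h := inv_anti₀ (cosh_pos ξ) (cosh_le_exp_half_sq ξ)
  rw [← exp_neg] at h
  linarith [add_one_le_exp (-(ξ ^ 2 / 2))]

theorem sqrt_le_rpow_mul_sqrt_of_le_one_of_le_mul_sq {x B ξ : ℝ} (hB : 0 ≤ B) (hξ : 0 ≤ ξ)
    (h1 : x ≤ 1) (h2 : x ≤ B * ξ ^ 2) : √x ≤ B ^ (1 / 4 : ℝ) * √ξ := by
  have hx : x ≤ √B * ξ := by
    rcases le_total (√B * ξ) 1 with h | h
    · have : B * ξ ^ 2 = (√B * ξ) ^ 2 := by rw [mul_pow, sq_sqrt hB]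
      nlinarith [mul_nonneg (sqrt_nonneg B) hξ]
    · linarith
  calc √x ≤ √(√B * ξ) := sqrt_le_sqrt hx
    _ = B ^ (1 / 4 : ℝ) * √ξ := by
      rw [sqrt_mul (sqrt_nonneg B), sqrt_eq_rpow, sqrt_eq_rpow, ← rpow_mul hB]
      norm_num

theorem tsum_eq_tsum_succ_of_apply_zero {α : Type*} [AddCommMonoid α] [TopologicalSpace α]
    {f : ℕ → α} (h : f 0 = 0) : ∑' n, f n = ∑' k, f (k + 1) := by
  refine (Nat.succ_injective.tsum_eq fun n hn => ?_).symm
  obtain ⟨k, rfl⟩ := Nat.exists_eq_succ_of_ne_zero (n := n) (by rintro rfl; exact hn h)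
  exact ⟨k, rfl⟩

section Weights

variable {ι : Type*} {c f : ι → ℝ}

theorem tsum_mul_sq_le_one (hc0 : ∀ i, 0 ≤ c i) (hc : HasSum c 1) (hf : ∀ i, |f i| ≤ 1) :
    ∑' i, c i * f i ^ 2 ≤ 1 := by
  have hle : ∀ i, c i * f i ^ 2 ≤ c i := fun i =>
    mul_le_of_le_one_right (hc0 i) (sq_le_one_iff_abs_le_one _ |>.2 (hf i))
  calc ∑' i, c i * f i ^ 2
      ≤ ∑' i, c i := Summable.tsum_le_tsum hle
        (hc.summable.of_nonneg_of_le (fun i => mul_nonneg (hc0 i) (sq_nonneg _)) hle) hc.summable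
    _ = 1 := hc.tsum_eq

theorem quarter_mul_sq_sub_sq_le_tsum_mul_one_sub_sq (hc0 : ∀ i, 0 ≤ c i) (hc : HasSum c 1)
    (hf : ∀ i, |f i| ≤ 1) :
    1 / 4 * (1 + ∑' i, c i * f i ^ 2) ^ 2 - (∑' i, c i * f i) ^ 2 ≤
      ∑' i, c i * (1 - f i) ^ 2 := by
  have hcf : Summable fun i => c i * f i := hc.summable.of_norm_bounded fun i => by
    rw [norm_mul, norm_of_nonneg (hc0 i), norm_eq_abs]
    exact mul_le_of_le_one_right (hc0 i) (hf i)
  have hcf2 : Summable fun i => c i * f i ^ 2 := hc.summable.of_norm_bounded fun i => by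
    rw [norm_mul, norm_of_nonneg (hc0 i), norm_pow, norm_eq_abs]
    exact mul_le_of_le_one_right (hc0 i) (pow_le_one₀ (abs_nonneg _) (hf i))
  have hI : ∑' i, c i * f i ≤ 1 := by
    calc ∑' i, c i * f i
        ≤ ∑' i, c i := Summable.tsum_le_tsum
          (fun i => mul_le_of_le_one_right (hc0 i) (abs_le.1 (hf i)).2) hcf hc.summable
      _ = 1 := hc.tsum_eq
  have hS := tsum_mul_sq_le_one hc0 hc hf
  have hW : ∑' i, c i * (1 - f i) ^ 2 =
      1 + ∑' i, c i * f i ^ 2 - 2 * ∑' i, c i * f i := by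
    have hexp : (fun i => c i * (1 - f i) ^ 2) =
        fun i => c i + c i * f i ^ 2 - 2 * (c i * f i) := by
      funext i; ring
    rw [hexp, (hc.summable.add hcf2).tsum_sub (hcf.mul_left 2), hc.summable.tsum_add hcf2,
      tsum_mul_left, hc.tsum_eq]
  have hW0 : 0 ≤ ∑' i, c i * (1 - f i) ^ 2 :=
    tsum_nonneg fun i => mul_nonneg (hc0 i) (sq_nonneg _)
  rw [hW] at hW0 ⊢
  generalize ∑' i, c i * f i ^ 2 = S at *
  generalize ∑' i, c i * f i = I at *
  nlinarith [mul_nonneg hW0 (by linarith : 0 ≤ 2 - ((1 + S) / 2 + I))]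

end Weights

theorem tsum_mul_one_sub_pow_sq_le {c : ℕ → ℝ} (hc0 : ∀ k, 0 ≤ c k)
    (hkc : Summable fun k => k * c k) {u : ℝ} (hu0 : 0 ≤ u) (hu1 : u ≤ 1) :
    ∑' k, c k * (1 - u ^ k) ^ 2 ≤ (1 - u) * ∑' k, k * c k := by
  have hle : ∀ k : ℕ, c k * (1 - u ^ k) ^ 2 ≤ (1 - u) * (k * c k) := fun k => by
    have h0 : 0 ≤ 1 - u ^ k := sub_nonneg.2 (pow_le_one₀ hu0 hu1)
    have h1 : 1 - u ^ k ≤ 1 := sub_le_self _ (pow_nonneg hu0 k)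
    have := one_sub_pow_le_mul_one_sub (by linarith : -1 ≤ u) k
    nlinarith [hc0 k, mul_le_mul_of_nonneg_left h1 h0]
  rw [← tsum_mul_left]
  exact Summable.tsum_le_tsum hle ((hkc.mul_left _).of_nonneg_of_le
    (fun k => mul_nonneg (hc0 k) (sq_nonneg _)) hle) (hkc.mul_left _)

theorem Complex.norm_ofReal_mul_sq (t : ℝ) (z : ℂ) : ‖(t : ℂ) * z‖ ^ 2 = t ^ 2 * ‖z‖ ^ 2 := by
  rw [norm_mul, Complex.norm_real, norm_eq_abs, mul_pow, sq_abs]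

theorem Complex.conj_mul_ofReal_mul (t : ℝ) (z : ℂ) :
    starRingEnd ℂ z * (t * z) = ((t * ‖z‖ ^ 2 : ℝ) : ℂ) := by
  rw [mul_left_comm, Complex.conj_mul', Complex.ofReal_mul, Complex.ofReal_pow]

noncomputable def photonAddedWeight (φ : ℕ → ℂ) (E : ℝ) (k : ℕ) : ℝ :=
  (k + 1) * ‖φ k‖ ^ 2 / (E + 1)

section PhotonAdded

variable {φ : ℕ → ℂ} {E : ℝ}

theorem photonAddedWeight_nonneg (hE : 0 ≤ E + 1) (k : ℕ) : 0 ≤ photonAddedWeight φ E k := by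
  unfold photonAddedWeight; positivity

theorem norm_sq_photonAdded (hE : 0 ≤ E + 1) (k : ℕ) :
    ‖((√((k : ℝ) + 1) / √(E + 1) : ℝ) : ℂ) * φ k‖ ^ 2 = photonAddedWeight φ E k := by
  rw [Complex.norm_ofReal_mul_sq, div_pow, sq_sqrt (by positivity), sq_sqrt hE,
    photonAddedWeight, div_mul_eq_mul_div]

theorem hasSum_photonAddedWeight (h0 : HasSum (fun k => ‖φ k‖ ^ 2) 1)
    (h1 : HasSum (fun k : ℕ => (k : ℝ) * ‖φ k‖ ^ 2) E) (hE : E + 1 ≠ 0) :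
    HasSum (photonAddedWeight φ E) 1 := by
  have h := (h1.add h0).div_const (E + 1)
  rw [div_self hE] at h
  exact h.congr_fun fun k => by simp only [photonAddedWeight]; ring

theorem hasSum_mul_photonAddedWeight {M : ℝ}
    (h1 : HasSum (fun k : ℕ => (k : ℝ) * ‖φ k‖ ^ 2) E)
    (h2 : HasSum (fun k : ℕ => (k : ℝ) ^ 2 * ‖φ k‖ ^ 2) M) :
    HasSum (fun k : ℕ => k * photonAddedWeight φ E k) ((E + M) / (E + 1)) := by
  refine ((h1.add h2).div_const (E + 1)).congr_fun fun k => ?_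
  simp only [photonAddedWeight]; ring

end PhotonAdded

/-- Lemma 3 of the paper: let `φ` be a normalized state in the Fock basis with
mean photon number `E` and second moment `M`, let `ψ = a†φ/‖a†φ‖` be the
normalized photon-added state and `ψ̃` its attenuated version obtained by
replacing `a†` with `a† (cosh ξ)^(−a†a)`. Then `‖ψ̃‖² ≤ 1` and the trace
distance `D(ψ, ψ̃) = √(¼ (1 + ‖ψ̃‖²)² − |⟨ψ, ψ̃⟩|²)` is at most
`(8 (E+M)/(E+1))^(1/4) √ξ`. -/
theorem attenuated_photon_addition_bound (φ : ℕ → ℂ) (E M : ℝ)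
    (h0 : Summable fun k : ℕ => ‖φ k‖ ^ 2)
    (h1 : Summable fun k : ℕ => (k : ℝ) * ‖φ k‖ ^ 2)
    (h2 : Summable fun k : ℕ => (k : ℝ) ^ 2 * ‖φ k‖ ^ 2)
    (hnorm : ∑' k : ℕ, ‖φ k‖ ^ 2 = 1)
    (hE : ∑' k : ℕ, (k : ℝ) * ‖φ k‖ ^ 2 = E)
    (hM : ∑' k : ℕ, (k : ℝ) ^ 2 * ‖φ k‖ ^ 2 = M)
    (ξ : ℝ) (hξ : 0 ≤ ξ)
    (ψ ψt : ℕ → ℂ)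
    (hψ0 : ψ 0 = 0) (hψt0 : ψt 0 = 0)
    (hψ : ∀ k : ℕ, ψ (k + 1) =
      ((Real.sqrt ((k : ℝ) + 1) / Real.sqrt (E + 1) : ℝ) : ℂ) * φ k)
    (hψt : ∀ k : ℕ, ψt (k + 1) =
      ((Real.sqrt ((k : ℝ) + 1) * Real.cosh ξ ^ (-(k : ℝ)) / Real.sqrt (E + 1) : ℝ) : ℂ) * φ k) :
    (∑' n : ℕ, ‖ψt n‖ ^ 2 ≤ 1) ∧
    Real.sqrt ((1 / 4) * (1 + ∑' n : ℕ, ‖ψt n‖ ^ 2) ^ 2 -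
        ‖∑' n : ℕ, (starRingEnd ℂ) (ψ n) * ψt n‖ ^ 2) ≤
      (8 * (E + M) / (E + 1)) ^ ((1 : ℝ) / 4) * Real.sqrt ξ := by
  have hE0 : 0 ≤ E := hE ▸ tsum_nonneg fun k => by positivity
  have hM0 : 0 ≤ M := hM ▸ tsum_nonneg fun k => by positivity
  set u := (cosh ξ)⁻¹
  have hu0 : 0 ≤ u := inv_nonneg.2 (cosh_pos ξ).le
  have hu1 : u ≤ 1 := inv_le_one_of_one_le₀ (one_le_cosh ξ)
  have hu : ∀ k, |u ^ k| ≤ 1 := fun k => by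
    rw [abs_of_nonneg (pow_nonneg hu0 k)]; exact pow_le_one₀ hu0 hu1
  set w := photonAddedWeight φ E
  have hw0 : ∀ k, 0 ≤ w k := photonAddedWeight_nonneg (by linarith)
  have hw : HasSum w 1 :=
    hasSum_photonAddedWeight (hnorm ▸ h0.hasSum) (hE ▸ h1.hasSum) (by linarith)
  have hkw := hasSum_mul_photonAddedWeight (hE ▸ h1.hasSum) (hM ▸ h2.hasSum)
  have hψw : ∀ k, ‖ψ (k + 1)‖ ^ 2 = w k := fun k => hψ k ▸ norm_sq_photonAdded (by linarith) k
  have hψtψ : ∀ k : ℕ, ψt (k + 1) = ((u ^ k : ℝ) : ℂ) * ψ (k + 1) := fun k => by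
    have hrpow : cosh ξ ^ (-(k : ℝ)) = u ^ k := by
      rw [rpow_neg_natCast, zpow_neg, zpow_natCast, inv_pow]
    rw [hψt, hψ, ← mul_assoc, ← Complex.ofReal_mul, hrpow, mul_div_right_comm,
      mul_comm (u ^ k)]
  have hS : ∑' n, ‖ψt n‖ ^ 2 = ∑' k, w k * (u ^ k) ^ 2 := by
    rw [tsum_eq_tsum_succ_of_apply_zero (by simp [hψt0])]
    simp_rw [hψtψ, Complex.norm_ofReal_mul_sq, hψw, mul_comm]
  have hI : ∑' n, starRingEnd ℂ (ψ n) * ψt n = ((∑' k, w k * u ^ k : ℝ) : ℂ) := by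
    rw [tsum_eq_tsum_succ_of_apply_zero (by simp [hψ0]), Complex.ofReal_tsum]
    simp_rw [hψtψ, Complex.conj_mul_ofReal_mul, hψw, mul_comm]
  have hS1 := tsum_mul_sq_le_one hw0 hw hu
  refine ⟨hS ▸ hS1, ?_⟩
  rw [hS, hI, Complex.norm_real, norm_eq_abs, sq_abs]
  refine sqrt_le_rpow_mul_sqrt_of_le_one_of_le_mul_sq (by positivity) hξ ?_ ?_
  · have hS0 : 0 ≤ ∑' k, w k * (u ^ k) ^ 2 :=
      tsum_nonneg fun k => mul_nonneg (hw0 k) (sq_nonneg _)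
    nlinarith
  · calc _ ≤ ∑' k, w k * (1 - u ^ k) ^ 2 :=
          quarter_mul_sq_sub_sq_le_tsum_mul_one_sub_sq hw0 hw hu
      _ ≤ (1 - u) * ((E + M) / (E + 1)) :=
        hkw.tsum_eq ▸ tsum_mul_one_sub_pow_sq_le hw0 hkw.summable hu0 hu1
      _ ≤ ξ ^ 2 / 2 * ((E + M) / (E + 1)) :=
        mul_le_mul_of_nonneg_right (one_sub_inv_cosh_le ξ) (by positivity)
      _ ≤ 8 * (E + M) / (E + 1) * ξ ^ 2 := by
        rw [mul_div_assoc]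
        nlinarith [sq_nonneg ξ, div_nonneg (by linarith : 0 ≤ E + M) (by linarith : 0 ≤ E + 1)]
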